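/- The Gerstenhaber bracket [f,g]_G = f\{g\} − (−1)^{(p−1)(q−1)} g\{f\} satisfies the graded Jacobi identity on Hochschild cochains: (−1)^{(p−1)(r−1)}[[f,g],h] + (−1)^{(q−1)(p−1)}[[g,h],f] + (−1)^{(r−1)(q−1)}[[h,f],g] = 0 for cochains f, g, h of degrees p, q, r. -/

import Mathlib

section Hochschild

variable {k A : Type*} [CommRing k] [Ring A] [Algebra k A]

/-- `sgn n x = (-1)^n • x`. -/
def sgn {A : Type*} [Neg A] (n : ℤ) (x : A) : A := if Even n then x else -x

/-- A `k`-multilinear map `A^{⊗n} → A` (a Hochschild `n`-cochain) viewed as a function on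
sequences, reading the first `n` entries. -/
def seqOf {n : ℕ} (f : MultilinearMap k (fun _ : Fin n => A) A) : (ℕ → A) → A :=
  fun a => f fun i => a i

/-- The cup product of cochains; `p` is the degree of `f`:
`(f ⌣ g)(a_1,…,a_{p+q}) = f(a_1,…,a_p) * g(a_{p+1},…,a_{p+q})`. -/
def cup (p : ℕ) (f g : (ℕ → A) → A) : (ℕ → A) → A :=
  fun a => f a * g fun i => a (i + p)

/-- The circle (brace) product `f{g}` of a degree `p` cochain `f` and a degree `q` cochain `g`:
`f{g}(a_1,…,a_{p+q−1}) = Σ_{i=1}^{p} (−1)^{(q−1)(i−1)}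
  f(a_1,…,a_{i−1}, g(a_i,…,a_{i+q−1}), a_{i+q},…,a_{p+q−1})` (indices here 0-based). -/
def circ (p q : ℕ) (f g : (ℕ → A) → A) : (ℕ → A) → A :=
  fun a => ∑ i ∈ Finset.range p,
    sgn (((q : ℤ) - 1) * (i : ℤ))
      (f fun j => if j < i then a j
        else if j = i then g (fun l => a (l + i))
        else a (j + q - 1))

/-- The Hochschild codifferential of a degree `n` cochain:
`(df)(a_1,…,a_{n+1}) = a_1 f(a_2,…,a_{n+1}) + Σ_{i=1}^n (−1)^i f(a_1,…,a_i a_{i+1},…,a_{n+1})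
 + (−1)^{n+1} f(a_1,…,a_n) a_{n+1}`. -/
def hd (n : ℕ) (f : (ℕ → A) → A) : (ℕ → A) → A := fun a =>
  a 0 * f (fun i => a (i + 1)) +
    (∑ i ∈ Finset.range n, sgn ((i : ℤ) + 1)
      (f fun j => if j < i then a j else if j = i then a i * a (i + 1) else a (j + 1))) +
    sgn ((n : ℤ) + 1) (f a * a n)

/-- The signed codifferential `∂f = (−1)^{|f|} df`. -/
def pd (n : ℕ) (f : (ℕ → A) → A) : (ℕ → A) → A := fun a => sgn (n : ℤ) (hd n f a)

end Hochschild

section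
variable {k A : Type*} [CommRing k] [Ring A] [Algebra k A]

/-- The Gerstenhaber bracket `[f,g]_G = f{g} − (−1)^{(p−1)(q−1)} g{f}` of cochains of
degrees `p` and `q`; it has degree `p + q − 1`. -/
def gbracket (p q : ℕ) (f g : (ℕ → A) → A) : (ℕ → A) → A :=
  fun a => circ p q f g a - sgn (((p : ℤ) - 1) * ((q : ℤ) - 1)) (circ q p g f a)

end

/-!
Expanding the two brackets in each term by bilinearity writes the left-hand side as a signed sum
of the twelve iterated circle products `(x ∘ y) ∘ z` and `x ∘ (y ∘ z)`, `{x, y, z} = {f, g, h}`.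
These group into associators `(x ∘ y) ∘ z - x ∘ (y ∘ z)`, which cancel in pairs by the graded
pre-Lie identity
`(x ∘ y) ∘ z - x ∘ (y ∘ z) = (-1)^{(|y|-1)(|z|-1)} ((x ∘ z) ∘ y - x ∘ (z ∘ y))`:
in `(x ∘ y) ∘ z` the insertions of `z` into `y` are exactly `x ∘ (y ∘ z)`, and the remaining ones,
which put `y` and `z` into two different slots of `x`, are symmetric in `y` and `z` up to that sign.
-/

namespace Gerstenhaber

open Finset

section Sign

variable {B C : Type*} [AddCommGroup B] [AddCommGroup C]

theorem sgn_sgn (m n : ℤ) (x : B) : sgn m (sgn n x) = sgn (m + n) x := by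
  unfold sgn
  rcases Int.even_or_odd m with hm | hm <;> rcases Int.even_or_odd n with hn | hn <;>
    simp [hm, hn, Int.even_add, Int.not_even_iff_odd.mpr]

theorem sgn_congr {m n : ℤ} (h : Even (m - n)) (x : B) : sgn m x = sgn n x := by
  simp only [sgn, Int.even_sub.mp h]

theorem sgn_zero (n : ℤ) : sgn n (0 : B) = 0 := by
  unfold sgn; split <;> simp

theorem sgn_even {n : ℤ} (h : Even n) (x : B) : sgn n x = x := if_pos h

theorem sgn_add (n : ℤ) (x y : B) : sgn n (x + y) = sgn n x + sgn n y := by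
  unfold sgn; split <;> [rfl; abel]

theorem sgn_sub (n : ℤ) (x y : B) : sgn n (x - y) = sgn n x - sgn n y := by
  unfold sgn; split <;> [rfl; abel]

theorem sgn_sum {ι : Type*} (s : Finset ι) (n : ℤ) (F : ι → B) :
    sgn n (∑ i ∈ s, F i) = ∑ i ∈ s, sgn n (F i) := by
  unfold sgn; split <;> simp

theorem map_sgn (φ : B →+ C) (n : ℤ) (x : B) : φ (sgn n x) = sgn n (φ x) := by
  unfold sgn; split <;> simp

end Sign

theorem sum_range_split_around {M : Type*} [AddCommMonoid M] {p j : ℕ} (hj : j < p) (q : ℕ)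
    (T : ℕ → M) :
    ∑ i ∈ range (p + q - 1), T i
      = (∑ i ∈ range j, T i) + (∑ t ∈ range q, T (j + t)) + ∑ i ∈ Ico (j + 1) p, T (i + q - 1) := by
  rw [range_eq_Ico, ← sum_Ico_consecutive T (Nat.zero_le j) (by omega : j ≤ p + q - 1),
    ← sum_Ico_consecutive T (by omega : j ≤ j + q) (by omega : j + q ≤ p + q - 1),
    ← range_eq_Ico, ← add_assoc, sum_Ico_eq_sum_range, sum_Ico_eq_sum_range T (j + q),
    sum_Ico_eq_sum_range _ (j + 1), Nat.add_sub_cancel_left]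
  congr 1
  exact sum_congr (by congr 1; omega) fun t _ => congrArg T (by omega)

theorem sum_range_sum_range_eq_sum_Ico {M : Type*} [AddCommMonoid M] (p : ℕ) (F : ℕ → ℕ → M) :
    ∑ j ∈ range p, ∑ i ∈ range j, F i j = ∑ i ∈ range p, ∑ j ∈ Ico (i + 1) p, F i j :=
  sum_comm' fun j i => by simp only [mem_range, mem_Ico]; omega

variable {A : Type*}

/-- The summand `F(a_0, …, a_{i-1}, G(a_i, …, a_{i+s-1}), a_{i+s}, …)` of `F ∘ G`, for `G` of
degree `s`. -/
def insertAt (i s : ℕ) (F G : (ℕ → A) → A) : (ℕ → A) → A :=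
  fun a => F fun j => if j < i then a j else if j = i then G (fun l => a (l + i)) else a (j + s - 1)

def ReadsFirst (n : ℕ) (F : (ℕ → A) → A) : Prop :=
  ∀ a b : ℕ → A, (∀ i < n, a i = b i) → F a = F b

def splice (i : ℕ) (b c : ℕ → A) (x : A) : ℕ → A :=
  fun j => if j < i then b j else if j = i then x else c j

theorem insertAt_apply (i s : ℕ) (F G : (ℕ → A) → A) (a : ℕ → A) :
    insertAt i s F G a = F (splice i a (fun j => a (j + s - 1)) (G fun l => a (l + i))) := rfl

theorem insertAt_insertAt_nested (j t q r : ℕ) (ht : t < q) (F G H : (ℕ → A) → A)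
    (a : ℕ → A) :
    insertAt (j + t) r (insertAt j q F G) H a = insertAt j (q + r - 1) F (insertAt t r G H) a := by
  unfold insertAt
  refine congrArg F (funext fun m => ?_)
  dsimp only
  split_ifs <;> first
    | rfl
    | omega
    | exact congrArg a (by omega)
    | (refine congrArg G (funext fun l => ?_); split_ifs <;> first
        | rfl
        | omega
        | exact congrArg a (by omega)
        | exact congrArg H (funext fun l' => congrArg a (by omega)))

theorem insertAt_insertAt_of_lt (i j q r : ℕ) (hij : i < j) (F G H : (ℕ → A) → A)
    (hH : ReadsFirst r H) (a : ℕ → A) :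
    insertAt i r (insertAt j q F G) H a = insertAt (j + r - 1) q (insertAt i r F H) G a := by
  unfold insertAt
  refine congrArg F (funext fun m => ?_)
  dsimp only
  split_ifs <;> first
    | rfl
    | omega
    | exact congrArg a (by omega)
    | (refine hH _ _ fun l hl => ?_; split_ifs <;> first | rfl | omega)
    | (refine congrArg G (funext fun l => ?_); split_ifs <;> first
        | rfl | omega | exact congrArg a (by omega))

theorem insertAt_insertAt_of_gt (i j q r : ℕ) (hij : j < i) (F G H : (ℕ → A) → A)
    (hG : ReadsFirst q G) (a : ℕ → A) :
    insertAt (i + q - 1) r (insertAt j q F G) H a = insertAt j q (insertAt i r F H) G a := by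
  unfold insertAt
  refine congrArg F (funext fun m => ?_)
  dsimp only
  split_ifs <;> first
    | rfl
    | omega
    | exact congrArg a (by omega)
    | (refine hG _ _ fun l hl => ?_; split_ifs <;> first | rfl | omega)
    | (refine congrArg H (funext fun l => ?_); split_ifs <;> first
        | rfl | omega | exact congrArg a (by omega))

section Ring

variable [Ring A]

theorem circ_eq_sum_insertAt (p q : ℕ) (F G : (ℕ → A) → A) (a : ℕ → A) :
    circ p q F G a = ∑ i ∈ range p, sgn (((q : ℤ) - 1) * i) (insertAt i q F G a) := rfl

theorem circ_zero_left (s : ℕ) (F G : (ℕ → A) → A) (a : ℕ → A) : circ 0 s F G a = 0 := rfl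

theorem circ_sub_sgn_left (n s : ℕ) (X Y H : (ℕ → A) → A) (e : ℤ) (a : ℕ → A) :
    circ n s (fun b => X b - sgn e (Y b)) H a = circ n s X H a - sgn e (circ n s Y H a) := by
  rw [circ_eq_sum_insertAt, circ_eq_sum_insertAt, circ_eq_sum_insertAt, sgn_sum,
    ← sum_sub_distrib]
  refine sum_congr rfl fun i _ => ?_
  rw [show insertAt i s (fun b => X b - sgn e (Y b)) H a
      = insertAt i s X H a - sgn e (insertAt i s Y H a) from rfl, sgn_sub, sgn_sgn, sgn_sgn,
    add_comm e]

theorem sum_insertAt_disjoint_swap (p q r : ℕ) (F G H : (ℕ → A) → A) (hH : ReadsFirst r H)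
    (a : ℕ → A) :
    ∑ j ∈ range p, ∑ i ∈ range j,
        sgn (((r : ℤ) - 1) * i + ((q : ℤ) - 1) * j) (insertAt (j + r - 1) q (insertAt i r F H) G a)
      = sgn (((q : ℤ) - 1) * ((r : ℤ) - 1))
          (∑ j ∈ range p, ∑ i ∈ Ico (j + 1) p,
            sgn (((q : ℤ) - 1) * ((i : ℤ) + r - 1) + ((r : ℤ) - 1) * j)
              (insertAt j r (insertAt i q F G) H a)) := by
  rw [sum_range_sum_range_eq_sum_Ico, sgn_sum]
  refine sum_congr rfl fun i _ => ?_
  rw [sgn_sum]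
  refine sum_congr rfl fun j hj => ?_
  rw [insertAt_insertAt_of_lt i j q r (mem_Ico.mp hj).1 F G H hH a, sgn_sgn]
  exact sgn_congr ⟨-(((q : ℤ) - 1) * ((r : ℤ) - 1)), by ring⟩ _

end Ring

section Multilinear

variable [Ring A] {k : Type*} [CommRing k] [Algebra k A]

theorem readsFirst_seqOf {n : ℕ} (f : MultilinearMap k (fun _ : Fin n => A) A) :
    ReadsFirst n (seqOf f) :=
  fun _ _ h => congrArg f (funext fun i => h i i.2)

def seqOfSpliceHom {p : ℕ} (f : MultilinearMap k (fun _ : Fin p => A) A) {i : ℕ} (hi : i < p)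
    (b c : ℕ → A) : A →+ A :=
  AddMonoidHom.mk' (fun x => f (Function.update (fun j : Fin p => splice i b c 0 j) ⟨i, hi⟩ x))
    (fun x y => f.map_update_add _ ⟨i, hi⟩ x y)

theorem seqOf_splice {p : ℕ} (f : MultilinearMap k (fun _ : Fin p => A) A) {i : ℕ} (hi : i < p)
    (b c : ℕ → A) (x : A) : seqOf f (splice i b c x) = seqOfSpliceHom f hi b c x := by
  refine congrArg f (funext fun ⟨j, hj⟩ => ?_)
  by_cases hji : j = i
  · subst hji
    simp [splice]
  · rw [Function.update_of_ne (by simp [Fin.ext_iff, hji])]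
    simp [splice, hji]

theorem circ_seqOf_of_eq_zero (n s : ℕ) (f : MultilinearMap k (fun _ : Fin n => A) A)
    {Z : (ℕ → A) → A} (hZ : ∀ b, Z b = 0) (a : ℕ → A) : circ n s (seqOf f) Z a = 0 := by
  rw [circ_eq_sum_insertAt]
  exact sum_eq_zero fun i hi => by
    rw [insertAt_apply, hZ, seqOf_splice f (mem_range.mp hi), map_zero, sgn_zero]

theorem circ_seqOf_sub_sgn_right (n s : ℕ) (f : MultilinearMap k (fun _ : Fin n => A) A)
    (X Y : (ℕ → A) → A) (e : ℤ) (a : ℕ → A) :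
    circ n s (seqOf f) (fun b => X b - sgn e (Y b)) a
      = circ n s (seqOf f) X a - sgn e (circ n s (seqOf f) Y a) := by
  rw [circ_eq_sum_insertAt, circ_eq_sum_insertAt, circ_eq_sum_insertAt, sgn_sum,
    ← sum_sub_distrib]
  refine sum_congr rfl fun i hi => ?_
  simp only [insertAt_apply, seqOf_splice f (mem_range.mp hi), map_sub, map_sgn, sgn_sub,
    sgn_sgn, add_comm e]

theorem sum_insertAt_nested (p q r : ℕ) {j : ℕ} (hj : j < p)
    (f : MultilinearMap k (fun _ : Fin p => A) A) (G H : (ℕ → A) → A) (a : ℕ → A) :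
    ∑ t ∈ range q, sgn (((r : ℤ) - 1) * ((j + t : ℕ) : ℤ) + ((q : ℤ) - 1) * j)
        (insertAt (j + t) r (insertAt j q (seqOf f) G) H a)
      = sgn ((((q + r - 1 : ℕ) : ℤ) - 1) * j)
          (insertAt j (q + r - 1) (seqOf f) (circ q r G H) a) := by
  rcases Nat.eq_zero_or_pos q with rfl | hq
  · rw [range_zero, sum_empty, insertAt_apply, circ_zero_left, seqOf_splice f hj, map_zero,
      sgn_zero]
  · have hcast : ((q + r - 1 : ℕ) : ℤ) = q + r - 1 := by omega
    rw [insertAt_apply, circ_eq_sum_insertAt, seqOf_splice f hj, map_sum, sgn_sum]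
    refine sum_congr rfl fun t ht => ?_
    rw [insertAt_insertAt_nested j t q r (mem_range.mp ht), insertAt_apply,
      seqOf_splice f hj, map_sgn, sgn_sgn]
    exact sgn_congr ⟨0, by rw [hcast]; push_cast; ring⟩ _

/-- Inserting `H` into a summand `f(…, G(…), …)` of `f ∘ G` either lands inside `G`, which
gives `f ∘ (G ∘ H)`, or in a slot of `f` to the left or to the right of `G`. -/
theorem circ_circ_seqOf (p q r : ℕ) (f : MultilinearMap k (fun _ : Fin p => A) A)
    (G H : (ℕ → A) → A) (hG : ReadsFirst q G) (hH : ReadsFirst r H) (a : ℕ → A) :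
    circ (p + q - 1) r (circ p q (seqOf f) G) H a
      = circ p (q + r - 1) (seqOf f) (circ q r G H) a
        + (∑ j ∈ range p, ∑ i ∈ range j, sgn (((r : ℤ) - 1) * i + ((q : ℤ) - 1) * j)
            (insertAt (j + r - 1) q (insertAt i r (seqOf f) H) G a)
          + ∑ j ∈ range p, ∑ i ∈ Ico (j + 1) p,
            sgn (((r : ℤ) - 1) * ((i : ℤ) + q - 1) + ((q : ℤ) - 1) * j)
              (insertAt j q (insertAt i r (seqOf f) H) G a)) := by
  have hslot : ∀ j ∈ range p,
      ∑ i ∈ range (p + q - 1), sgn (((r : ℤ) - 1) * i + ((q : ℤ) - 1) * j)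
          (insertAt i r (insertAt j q (seqOf f) G) H a)
        = ∑ i ∈ range j, sgn (((r : ℤ) - 1) * i + ((q : ℤ) - 1) * j)
              (insertAt (j + r - 1) q (insertAt i r (seqOf f) H) G a)
          + sgn ((((q + r - 1 : ℕ) : ℤ) - 1) * j)
              (insertAt j (q + r - 1) (seqOf f) (circ q r G H) a)
          + ∑ i ∈ Ico (j + 1) p, sgn (((r : ℤ) - 1) * ((i : ℤ) + q - 1) + ((q : ℤ) - 1) * j)
              (insertAt j q (insertAt i r (seqOf f) H) G a) := by
    intro j hj
    have hjp := mem_range.mp hj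
    rw [sum_range_split_around hjp, sum_insertAt_nested p q r hjp f G H a]
    congr 1
    · congr 1
      exact sum_congr rfl fun i hi => by
        rw [insertAt_insertAt_of_lt i j q r (mem_range.mp hi) _ _ _ hH]
    · refine sum_congr rfl fun i hi => ?_
      have hcast : ((i + q - 1 : ℕ) : ℤ) = i + q - 1 := by have := (mem_Ico.mp hi).1; omega
      rw [insertAt_insertAt_of_gt i j q r (mem_Ico.mp hi).1 _ _ _ hG, hcast]
  rw [circ_eq_sum_insertAt]
  simp only [show ∀ i, insertAt i r (circ p q (seqOf f) G) H a
      = ∑ j ∈ range p, sgn (((q : ℤ) - 1) * j) (insertAt i r (insertAt j q (seqOf f) G) H a)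
    from fun _ => rfl, sgn_sum, sgn_sgn]
  rw [sum_comm, sum_congr rfl hslot, sum_add_distrib, sum_add_distrib, circ_eq_sum_insertAt p]
  abel

def circAssoc (p q r : ℕ) (F G H : (ℕ → A) → A) : (ℕ → A) → A :=
  fun a => circ (p + q - 1) r (circ p q F G) H a - circ p (q + r - 1) F (circ q r G H) a

/-- The graded pre-Lie identity: both sides are the insertions of `G` and `H` into two distinct
slots of `f`. -/
theorem circAssoc_seqOf_swap (p q r : ℕ) (f : MultilinearMap k (fun _ : Fin p => A) A)
    (G H : (ℕ → A) → A) (hG : ReadsFirst q G) (hH : ReadsFirst r H) (a : ℕ → A) :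
    circAssoc p q r (seqOf f) G H a
      = sgn (((q : ℤ) - 1) * ((r : ℤ) - 1)) (circAssoc p r q (seqOf f) H G a) := by
  unfold circAssoc
  rw [circ_circ_seqOf p q r f G H hG hH, circ_circ_seqOf p r q f H G hH hG,
    add_sub_cancel_left, add_sub_cancel_left, sum_insertAt_disjoint_swap p q r _ G H hH,
    sum_insertAt_disjoint_swap p r q _ H G hG,
    sgn_add, sgn_sgn, mul_comm ((r : ℤ) - 1) ((q : ℤ) - 1), sgn_even (Even.add_self _), add_comm]

theorem gbracket_gbracket_seqOf (p q r : ℕ) (F G : (ℕ → A) → A)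
    (h : MultilinearMap k (fun _ : Fin r => A) A) (a : ℕ → A) :
    gbracket (p + q - 1) r (gbracket p q F G) (seqOf h) a
      = circ (p + q - 1) r (circ p q F G) (seqOf h) a
        - sgn (((p : ℤ) - 1) * ((q : ℤ) - 1)) (circ (q + p - 1) r (circ q p G F) (seqOf h) a)
        - sgn (((p : ℤ) + q - 1 - 1) * ((r : ℤ) - 1))
            (circ r (p + q - 1) (seqOf h) (circ p q F G) a)
        + sgn (((p : ℤ) + q - 1 - 1) * ((r : ℤ) - 1) + ((p : ℤ) - 1) * ((q : ℤ) - 1))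
            (circ r (q + p - 1) (seqOf h) (circ q p G F) a) := by
  rw [add_comm q p]
  rcases Nat.eq_zero_or_pos (p + q) with hpq | hpq
  · -- the degree `p + q - 1` of `[F, G]` is truncated to `0`, but then `[F, G] = 0`
    obtain ⟨rfl, rfl⟩ : p = 0 ∧ q = 0 := by omega
    have hzero : ∀ b, gbracket 0 0 F G b = 0 := fun b => by
      rw [gbracket, circ_zero_left, circ_zero_left, sgn_zero, sub_zero]
    simp only [show 0 + 0 - 1 = 0 from rfl, gbracket, circ_zero_left,
      circ_seqOf_of_eq_zero _ _ _ hzero, circ_seqOf_of_eq_zero _ _ _ (circ_zero_left 0 F G),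
      circ_seqOf_of_eq_zero _ _ _ (circ_zero_left 0 G F), sgn_zero, sub_zero, add_zero]
  · have hcast : ((p + q - 1 : ℕ) : ℤ) = p + q - 1 := by omega
    unfold gbracket
    rw [circ_sub_sgn_left, circ_seqOf_sub_sgn_right, hcast, sgn_sub, sgn_sgn]
    abel

end Multilinear

end Gerstenhaber

section
variable {k A : Type*} [CommRing k] [Ring A] [Algebra k A]

open Gerstenhaber

/-- **Graded Jacobi identity for the Gerstenhaber bracket**: for cochains `f, g, h` of degrees
`p, q, r`,
`(−1)^{(p−1)(r−1)}[[f,g],h] + (−1)^{(q−1)(p−1)}[[g,h],f] + (−1)^{(r−1)(q−1)}[[h,f],g] = 0`. -/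
theorem gerstenhaber_bracket_jacobi (p q r : ℕ)
    (f : MultilinearMap k (fun _ : Fin p => A) A)
    (g : MultilinearMap k (fun _ : Fin q => A) A)
    (h : MultilinearMap k (fun _ : Fin r => A) A) (a : ℕ → A) :
    sgn (((p : ℤ) - 1) * ((r : ℤ) - 1))
        (gbracket (p + q - 1) r (gbracket p q (seqOf f) (seqOf g)) (seqOf h) a) +
      sgn (((q : ℤ) - 1) * ((p : ℤ) - 1))
        (gbracket (q + r - 1) p (gbracket q r (seqOf g) (seqOf h)) (seqOf f) a) +
      sgn (((r : ℤ) - 1) * ((q : ℤ) - 1))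
        (gbracket (r + p - 1) q (gbracket r p (seqOf h) (seqOf f)) (seqOf g) a) = 0 := by
  have hf := readsFirst_seqOf f
  have hg := readsFirst_seqOf g
  have hh := readsFirst_seqOf h
  have hfgh := circAssoc_seqOf_swap p q r f _ _ hg hh a
  have hghf := circAssoc_seqOf_swap q r p g _ _ hh hf a
  have hhfg := circAssoc_seqOf_swap r p q h _ _ hf hg a
  simp only [circAssoc, sub_eq_iff_eq_add] at hfgh hghf hhfg
  rw [gbracket_gbracket_seqOf, gbracket_gbracket_seqOf, gbracket_gbracket_seqOf, hfgh, hghf, hhfg]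
  -- every remaining sign depends only on the parities of `p`, `q` and `r`
  by_cases hp : Even p <;> by_cases hq : Even q <;> by_cases hr : Even r <;>
    simp only [sgn, Int.even_add, Int.even_sub, Int.even_mul, Int.even_coe_nat, hp, hq, hr,
      Int.not_even_one, iff_true, iff_false, not_true, or_true, or_false, if_true, if_false] <;>
    abel

end
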